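/- arXiv:1508.05963 — 2 statements merged into one kernel-verified Lean document; each statement's English description precedes it below -/
import Mathlib

section
/- For every n ≥ 3, the number of non-overlapping permutations of length n, i.e., #{τ ∈ S_n : |x(τ)| = 1}, is divisible by 4. -/
open scoped Classical

noncomputable section

/-- A permutation of length `n`, written in one-line notation as `τ 0, τ 1, …, τ (n-1)`. -/
abbrev Perm' (n : ℕ) := Equiv.Perm (Fin n)

/-- `σ` occurs in `τ` as a consecutive pattern at (0-indexed) starting position `i`:
the window `τ i, …, τ (i+m-1)` of adjacent entries is in the same relative order as `σ`. -/
def OccursAt {m n : ℕ} (σ : Perm' m) (τ : Perm' n) (i : ℕ) : Prop :=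
  ∃ h : i + m ≤ n, ∀ a b : Fin m,
    σ a < σ b ↔
      τ ⟨i + a, by have := a.isLt; omega⟩ < τ ⟨i + b, by have := b.isLt; omega⟩

/-- Consecutive pattern containment `σ ≤ τ`. -/
def PattLE {m n : ℕ} (σ : Perm' m) (τ : Perm' n) : Prop :=
  ∃ i, OccursAt σ τ i

/-- Permutations of arbitrary length: the carrier of the consecutive pattern poset. -/
abbrev PermS : Type := Σ n : ℕ, Perm' n

/-- The order of the consecutive pattern poset. -/
def pLE (p q : PermS) : Prop := PattLE p.2 q.2

/-- The strict order of the consecutive pattern poset. -/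
def pLT (p q : PermS) : Prop := pLE p q ∧ p ≠ q

/-- The covering relation of the consecutive pattern poset. -/
def pCovBy (p q : PermS) : Prop :=
  pLT p q ∧ ∀ r : PermS, pLT p r → pLT r q → False

/-- The open interval `(p,q)` in the consecutive pattern poset. -/
def openInterval (p q : PermS) : Set PermS := {r | pLT p r ∧ pLT r q}

/-- The Hasse diagram of the open interval `(p,q)`: vertices are the permutations strictly
between `p` and `q`, edges are the covering relations of the consecutive pattern poset. -/
def hasse (p q : PermS) : SimpleGraph (openInterval p q) :=
  SimpleGraph.fromRel fun a b => pCovBy a.1 b.1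

/-- The interval `[p,q]` is disconnected if the Hasse diagram of `(p,q)` is not connected. -/
def IntervalDisconnected (p q : PermS) : Prop := ¬ (hasse p q).Connected

/-- `window τ i m` is the reduction of the window of `τ` of length `m` starting at
(0-indexed) position `i`, i.e. the pattern `τ[i+1, i+m]` in 1-indexed notation. -/
def window {n : ℕ} (τ : Perm' n) (i m : ℕ) : Perm' m :=
  if h : i + m ≤ n then
    (Tuple.sort fun a : Fin m => τ ⟨i + a, by have := a.isLt; omega⟩)⁻¹
  else 1

/-- `τ` is monotone, i.e. equal to `12…n` or `n…21`. -/
def IsMonotone {n : ℕ} (τ : Perm' n) : Prop :=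
  (∀ a b : Fin n, a ≤ b → τ a ≤ τ b) ∨ (∀ a b : Fin n, a ≤ b → τ b ≤ τ a)

/-- `τ` has a bifix (a common proper prefix and proper suffix) of length `k`. -/
def HasBifixLen {n : ℕ} (τ : Perm' n) (k : ℕ) : Prop :=
  0 < k ∧ k < n ∧ window τ 0 k = window τ (n - k) k

/-- The length `|x(τ)|` of the exterior of `τ`, the longest bifix of `τ`. -/
def extLen {n : ℕ} (τ : Perm' n) : ℕ := Nat.findGreatest (HasBifixLen τ) n

/-- The exterior `x(τ)` of `τ`: its longest bifix. -/
def extPerm {n : ℕ} (τ : Perm' n) : Perm' (extLen τ) := window τ 0 (extLen τ)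

/-- The interior `i(τ) = τ[2,n-1]` of `τ`. -/
def intPerm {n : ℕ} (τ : Perm' n) : Perm' (n - 2) := window τ 1 (n - 2)

/-- `p` straddles `q`: `p < q`, `p` is both a prefix and a suffix of `q`,
and `p` has no other occurrence in `q`. -/
def Straddles (p q : PermS) : Prop :=
  pLT p q ∧ OccursAt p.2 q.2 0 ∧ OccursAt p.2 q.2 (q.1 - p.1) ∧
    ∀ i, OccursAt p.2 q.2 i → i = 0 ∨ i = q.1 - p.1

/-- The interval `[p,q]` contains a non-trivial disconnected subinterval, i.e. a
subinterval `[a,b]` of rank at least 3 which is disconnected. -/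
def HasNontrivDisconSub (p q : PermS) : Prop :=
  ∃ a b : PermS, pLE p a ∧ pLE a b ∧ pLE b q ∧ a.1 + 3 ≤ b.1 ∧ IntervalDisconnected a b

/-- The finite set of all permutations of length at most `N`. -/
def permsUpTo (N : ℕ) : Finset PermS :=
  (Finset.range (N + 1)).sigma fun n => (Finset.univ : Finset (Perm' n))

/-- The closed interval `[p,q]` of the consecutive pattern poset, as a finite set. -/
def intervalF (p q : PermS) : Finset PermS :=
  (permsUpTo q.1).filter fun r => pLE p r ∧ pLE r q

/-- The number of elements of the interval `[σ,τ]` of rank `r`, i.e. of length `|σ| + r`. -/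
def rankCard {m n : ℕ} (σ : Perm' m) (τ : Perm' n) (r : ℕ) : ℕ :=
  ((permsUpTo n).filter fun p => pLE ⟨m, σ⟩ p ∧ pLE p ⟨n, τ⟩ ∧ p.1 = m + r).card

/-- The direct sum `σ ⊕ π` of two permutations. -/
def dsum {m k : ℕ} (σ : Perm' m) (π : Perm' k) : Perm' (m + k) :=
  finSumFinEquiv.permCongr (σ.sumCongr π)



/-!
Complementation and reversal preserve the bifixes of a permutation, hence the non-overlapping
permutations. Complementation is an involution exchanging those that start with an ascent and
those that start with a descent. A non-overlapping permutation of length at least 3 that starts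
with an ascent ends with a descent, since otherwise its first two and last two entries would
form a bifix of length 2; so reversal maps the non-overlapping permutations starting with an
ascent to themselves, exchanging those with `τ₁ < τₙ` and those with `τ₁ > τₙ`.
-/

open Function

theorem Finset.card_eq_two_mul_card_filter_of_involutive {α : Type*} {s : Finset α} {f : α → α}
    (hf : Involutive f) (hs : ∀ x ∈ s, f x ∈ s) (p : α → Prop) [DecidablePred p]
    (hp : ∀ x ∈ s, p (f x) ↔ ¬ p x) : s.card = 2 * (s.filter p).card := by
  rw [← Finset.card_filter_add_card_filter_not p, two_mul, add_right_inj]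
  refine Finset.card_nbij' f f ?_ ?_ (fun x _ => hf x) (fun x _ => hf x) <;>
    intro x hx <;> simp only [Finset.coe_filter, Set.mem_ofPred_eq] at hx ⊢
  · exact ⟨hs x hx.1, (hp x hx.1).2 hx.2⟩
  · exact ⟨hs x hx.1, fun hfx => (hp x hx.1).1 hfx hx.2⟩

theorem Equiv.Perm.lt_iff_not_lt {α : Type*} [LinearOrder α] (σ : Equiv.Perm α) {a b : α}
    (h : a ≠ b) : σ a < σ b ↔ ¬ σ b < σ a :=
  (not_lt.trans (σ.injective.ne h).le_iff_lt).symm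

theorem Tuple.inv_sort_lt_inv_sort_iff {α : Type*} [LinearOrder α] {m : ℕ} {f : Fin m → α}
    (hf : Injective f) (a b : Fin m) :
    (Tuple.sort f)⁻¹ a < (Tuple.sort f)⁻¹ b ↔ f a < f b := by
  have hmono : StrictMono (f ∘ Tuple.sort f) :=
    (Tuple.monotone_sort f).strictMono_of_injective (hf.comp (Equiv.injective _))
  simpa using (hmono.lt_iff_lt (a := (Tuple.sort f)⁻¹ a) (b := (Tuple.sort f)⁻¹ b)).symm

theorem Equiv.Perm.eq_of_lt_iff_lt {m : ℕ} {σ σ' : Equiv.Perm (Fin m)}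
    (h : ∀ a b, σ a < σ b ↔ σ' a < σ' b) : σ = σ' := by
  have hmono : StrictMono (σ' ∘ ⇑σ⁻¹) := fun x y hxy => by
    simpa [← h] using hxy
  have hsort : (σ⁻¹ : Equiv.Perm (Fin m)) = Tuple.sort σ' :=
    Tuple.eq_sort_iff.2 ⟨hmono.monotone, fun i j hij he => absurd (hmono.injective he) hij.ne⟩
  exact inv_injective (hsort.trans (Tuple.sort_perm σ'))

section

variable {n : ℕ}

theorem window_lt_window_iff (τ : Perm' n) {i m : ℕ} (h : i + m ≤ n) (a b : Fin m) :
    window τ i m a < window τ i m b ↔ τ ⟨i + a, by omega⟩ < τ ⟨i + b, by omega⟩ := by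
  rw [window, dif_pos h]
  exact Tuple.inv_sort_lt_inv_sort_iff
    (fun x y hxy => Fin.ext (by simpa using τ.injective hxy)) a b

theorem window_eq_of_lt_iff_lt (τ : Perm' n) {i m : ℕ} (h : i + m ≤ n) {σ : Perm' m}
    (hσ : ∀ a b : Fin m, σ a < σ b ↔ τ ⟨i + a, by omega⟩ < τ ⟨i + b, by omega⟩) :
    window τ i m = σ :=
  Equiv.Perm.eq_of_lt_iff_lt fun a b => (window_lt_window_iff τ h a b).trans (hσ a b).symm

theorem window_eq_window_iff (τ : Perm' n) {i j m : ℕ} (hi : i + m ≤ n) (hj : j + m ≤ n) :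
    window τ i m = window τ j m ↔ ∀ a b : Fin m,
      (τ ⟨i + a, by omega⟩ < τ ⟨i + b, by omega⟩ ↔ τ ⟨j + a, by omega⟩ < τ ⟨j + b, by omega⟩) := by
  constructor
  · intro h a b
    rw [← window_lt_window_iff τ hi, ← window_lt_window_iff τ hj, h]
  · intro h
    exact window_eq_of_lt_iff_lt τ hi fun a b => (window_lt_window_iff τ hj a b).trans (h a b).symm

def complement (τ : Perm' n) : Perm' n := τ.trans Fin.revPerm

def reverse (τ : Perm' n) : Perm' n := Fin.revPerm.trans τ

@[simp]
theorem complement_apply (τ : Perm' n) (a : Fin n) : complement τ a = Fin.rev (τ a) := rfl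

@[simp]
theorem reverse_apply (τ : Perm' n) (a : Fin n) : reverse τ a = τ (Fin.rev a) := rfl

theorem complement_involutive : Involutive (complement (n := n)) :=
  fun τ => Equiv.ext fun a => by simp

theorem reverse_involutive : Involutive (reverse (n := n)) :=
  fun τ => Equiv.ext fun a => by simp

theorem window_complement (τ : Perm' n) {i m : ℕ} (h : i + m ≤ n) :
    window (complement τ) i m = complement (window τ i m) :=
  window_eq_of_lt_iff_lt _ h fun a b => by simp [window_lt_window_iff τ h]

theorem window_reverse (τ : Perm' n) {i m : ℕ} (h : i + m ≤ n) :
    window (reverse τ) i m = reverse (window τ (n - i - m) m) := by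
  refine window_eq_of_lt_iff_lt _ h fun a b => ?_
  have hpos : ∀ c : Fin m,
      (⟨n - i - m + Fin.rev c, by omega⟩ : Fin n) = Fin.rev ⟨i + c, by omega⟩ :=
    fun c => Fin.ext (by simp; omega)
  rw [reverse_apply, reverse_apply, window_lt_window_iff τ (by omega), hpos, hpos, reverse_apply,
    reverse_apply]

theorem hasBifixLen_complement_iff (τ : Perm' n) (k : ℕ) :
    HasBifixLen (complement τ) k ↔ HasBifixLen τ k := by
  refine and_congr_right fun _ => and_congr_right fun hk => ?_
  rw [window_complement τ (by omega), window_complement τ (by omega),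
    complement_involutive.injective.eq_iff]

theorem hasBifixLen_reverse_iff (τ : Perm' n) (k : ℕ) :
    HasBifixLen (reverse τ) k ↔ HasBifixLen τ k := by
  refine and_congr_right fun _ => and_congr_right fun hk => ?_
  rw [window_reverse τ (by omega), window_reverse τ (by omega),
    reverse_involutive.injective.eq_iff, show n - 0 - k = n - k by omega,
    show n - (n - k) - k = 0 by omega, eq_comm]

theorem extLen_complement (τ : Perm' n) : extLen (complement τ) = extLen τ := by
  unfold extLen
  congr 1
  ext k
  exact hasBifixLen_complement_iff τ k

theorem extLen_reverse (τ : Perm' n) : extLen (reverse τ) = extLen τ := by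
  unfold extLen
  congr 1
  ext k
  exact hasBifixLen_reverse_iff τ k

theorem not_hasBifixLen_of_extLen_eq_one {τ : Perm' n} (h : extLen τ = 1) {k : ℕ} (hk : 2 ≤ k) :
    ¬ HasBifixLen τ k := fun hb => by
  have := Nat.le_findGreatest hb.2.1.le hb
  rw [← extLen, h] at this
  omega

end

theorem hasBifixLen_two_iff {m : ℕ} (τ : Perm' (m + 3)) :
    HasBifixLen τ 2 ↔ (τ 0 < τ 1 ↔ τ (Fin.rev 1) < τ (Fin.last _)) := by
  rw [HasBifixLen, window_eq_window_iff τ (by omega) (by omega)]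
  have hpos₁ : (⟨m + 1, by omega⟩ : Fin (m + 3)) = Fin.rev 1 := Fin.ext (by simp)
  have hpos₀ : (⟨m + 1 + 1, by omega⟩ : Fin (m + 3)) = Fin.last _ := rfl
  have hswap₀₁ : τ 1 < τ 0 ↔ ¬ τ 0 < τ 1 := τ.lt_iff_not_lt (by simp)
  have hswap : τ (Fin.last _) < τ (Fin.rev 1) ↔ ¬ τ (Fin.rev 1) < τ (Fin.last _) :=
    τ.lt_iff_not_lt (by simp [Fin.ext_iff])
  simp only [Fin.forall_fin_two, Order.lt_two_iff, zero_le, lt_add_iff_pos_left,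
    Order.lt_add_one_iff, Fin.isValue, Fin.coe_ofNat_eq_mod, Nat.zero_mod, add_zero, Fin.zero_eta,
    lt_self_iff_false, Nat.reduceSubDiff, hpos₁, Nat.mod_succ, zero_add, Fin.mk_one, hpos₀,
    true_and, and_true]
  rw [hswap₀₁, hswap, not_iff_not, and_self]

theorem reverse_zero_lt_reverse_one_of_extLen_eq_one {m : ℕ} {τ : Perm' (m + 3)}
    (h : extLen τ = 1) (hasc : τ 0 < τ 1) : reverse τ 0 < reverse τ 1 := by
  have hno := not_hasBifixLen_of_extLen_eq_one h le_rfl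
  rw [hasBifixLen_two_iff] at hno
  rw [reverse_apply, reverse_apply, Fin.rev_zero]
  exact (τ.lt_iff_not_lt (by simp [Fin.ext_iff])).2 fun hdesc => hno (iff_of_true hasc hdesc)

/-- Lemma 6.1: for `n ≥ 3`, the number of non-overlapping permutations
of length `n` (those with `|x(τ)| = 1`) is divisible by 4. -/
theorem stmt11 {n : ℕ} (hn : 3 ≤ n) :
    4 ∣ (Finset.univ.filter fun τ : Perm' n => extLen τ = 1).card := by
  obtain ⟨m, rfl⟩ := Nat.exists_eq_add_of_le' hn
  set S := Finset.univ.filter fun τ : Perm' (m + 3) => extLen τ = 1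
  set T := S.filter fun τ => τ 0 < τ 1
  have hS : S.card = 2 * T.card :=
    Finset.card_eq_two_mul_card_filter_of_involutive complement_involutive
      (fun τ hτ => by simpa [S, extLen_complement] using hτ) _
      (fun τ _ => by simpa using τ.lt_iff_not_lt (a := 1) (b := 0) (by simp))
  have hT : T.card = 2 * (T.filter fun τ => τ 0 < τ (Fin.last _)).card :=
    Finset.card_eq_two_mul_card_filter_of_involutive reverse_involutive
      (fun τ hτ => by
        simp only [T, S, Finset.mem_filter, Finset.mem_univ, true_and] at hτ ⊢
        exact ⟨(extLen_reverse τ).trans hτ.1,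
          reverse_zero_lt_reverse_one_of_extLen_eq_one hτ.1 hτ.2⟩) _
      (fun τ _ => by
        simpa using τ.lt_iff_not_lt (a := Fin.last _) (b := 0) (by simp [Fin.ext_iff]))
  rw [hS, hT, ← mul_assoc]
  exact dvd_mul_right 4 _

end
end

section
/- There exists a function g : ℕ → ℝ with lim_{n→∞} n·g(n) = 0 such that for all n ≥ 2 and all m with 1 ≤ m ≤ n−1, the proportion of permutations of length n whose exterior has length at least m satisfies #{τ ∈ S_n : |x(τ)| ≥ m} / n! ≤ Σ_{i=m}^{⌊n/2⌋} 1/i! + g(n), where the sum is taken to be 0 when m > ⌊n/2⌋. -/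
/-!
If `τ ∈ S_n` has a bifix of length `k`, its last `k` entries are in the same relative order as
its first `k`. They take the values not among the first `n - k` entries, so reading them left to
right, each is fixed by an earlier entry and the set of the first `k` values. Hence `τ` is
determined by its first `n - k` entries together with the set of its first `k` values, which
leaves at most `2 ^ n * n! / k!` such `τ`; when `2 * k ≤ n` the first `k` entries are among the
first `n - k`, leaving at most `n! / k!`. Summing over the possible exterior lengths `k ≥ m`, the
terms with `k ≤ n / 2` give `∑ 1 / k!`, and the at most `n` terms with `k > n / 2` contribute at
most `n * 2 ^ n / (n / 2 + 1)!`, which is `o(1 / n)`.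
-/

open scoped Classical

noncomputable section

open Finset
open scoped Nat Topology

namespace Tuple

variable {α β : Type*} [LinearOrder α] [LinearOrder β] {m : ℕ}

theorem lt_iff_symm_sort_lt {f : Fin m → α} (hf : Function.Injective f) (a b : Fin m) :
    f a < f b ↔ (sort f).symm a < (sort f).symm b := by
  have hmono : StrictMono (f ∘ sort f) :=
    (monotone_sort f).strictMono_of_injective (hf.comp (sort f).injective)
  simpa using hmono.lt_iff_lt (a := (sort f).symm a) (b := (sort f).symm b)

theorem lt_iff_lt_of_sort_eq {f : Fin m → α} {g : Fin m → β} (hf : Function.Injective f)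
    (hg : Function.Injective g) (h : sort f = sort g) (a b : Fin m) :
    f a < f b ↔ g a < g b := by
  rw [lt_iff_symm_sort_lt hf, lt_iff_symm_sort_lt hg, h]

end Tuple

theorem Finset.eq_of_card_filter_lt_eq {α : Type*} [LinearOrder α] {s : Finset α} {x y : α}
    (hx : x ∈ s) (hy : y ∈ s) (h : #{z ∈ s | z < x} = #{z ∈ s | z < y}) : x = y := by
  have key : ∀ {x y}, x ∈ s → x < y → #{z ∈ s | z < x} < #{z ∈ s | z < y} := fun hx hxy =>
    card_lt_card <| (ssubset_iff_of_subset fun z hz => mem_filter.2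
      ⟨(mem_filter.1 hz).1, (mem_filter.1 hz).2.trans hxy⟩).2 ⟨_, mem_filter.2 ⟨hx, hxy⟩, by simp⟩
  rcases lt_trichotomy x y with hxy | hxy | hxy
  · exact absurd h (key hx hxy).ne
  · exact hxy
  · exact absurd h (key hy hxy).ne'

theorem Nat.sq_mul_two_pow_le (n : ℕ) : n ^ 2 * 2 ^ n ≤ 4 * 16 ^ (n / 2 + 1) := by
  set M := n / 2 + 1
  have hM : M ^ 2 ≤ 4 ^ M :=
    calc M ^ 2 ≤ (2 ^ M) ^ 2 := Nat.pow_le_pow_left Nat.lt_two_pow_self.le 2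
      _ = 4 ^ M := by rw [← pow_mul, mul_comm, pow_mul]; norm_num
  calc n ^ 2 * 2 ^ n ≤ (2 * M) ^ 2 * 2 ^ (2 * M) := by gcongr <;> omega
    _ = 4 * M ^ 2 * 4 ^ M := by rw [pow_mul]; ring
    _ ≤ 4 * 4 ^ M * 4 ^ M := by gcongr
    _ = 4 * 16 ^ M := by rw [mul_assoc, ← mul_pow]; norm_num

theorem tendsto_mul_mul_two_pow_div_factorial :
    Filter.Tendsto (fun n : ℕ => (n : ℝ) * (n * 2 ^ n / (n / 2 + 1)!)) Filter.atTop (𝓝 0) := by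
  have hM : Filter.Tendsto (fun n : ℕ => n / 2 + 1) Filter.atTop Filter.atTop :=
    Filter.tendsto_atTop_atTop.2 fun b => ⟨2 * b, fun n hn => by omega⟩
  have h16 := ((FloorSemiring.tendsto_pow_div_factorial_atTop (16 : ℝ)).comp hM).const_mul 4
  rw [mul_zero] at h16
  refine squeeze_zero (fun n => by positivity) (fun n => ?_) h16
  calc (n : ℝ) * (n * 2 ^ n / (n / 2 + 1)!) = ((n ^ 2 * 2 ^ n : ℕ) : ℝ) / (n / 2 + 1)! := by
        push_cast; ring
    _ ≤ ((4 * 16 ^ (n / 2 + 1) : ℕ) : ℝ) / (n / 2 + 1)! := by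
        exact div_le_div_of_nonneg_right (by exact_mod_cast Nat.sq_mul_two_pow_le n) (by positivity)
    _ = 4 * (16 ^ (n / 2 + 1) / (n / 2 + 1)!) := by push_cast; ring

theorem Nat.factorial_mul_descFactorial_sub {n k : ℕ} (hk : k ≤ n) :
    k ! * n.descFactorial (n - k) = n ! := by
  simpa [Nat.sub_sub_self hk] using Nat.factorial_mul_descFactorial (n.sub_le k)

section Bifix

variable {n k : ℕ}

theorem lt_iff_lt_of_window_eq {n' m i j : ℕ} {τ : Perm' n} {τ' : Perm' n'} (hi : i + m ≤ n)
    (hj : j + m ≤ n') (h : window τ i m = window τ' j m) (a b : Fin m) :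
    τ ⟨i + a, by omega⟩ < τ ⟨i + b, by omega⟩ ↔ τ' ⟨j + a, by omega⟩ < τ' ⟨j + b, by omega⟩ := by
  unfold window at h
  rw [dif_pos hi, dif_pos hj, inv_inj] at h
  refine Tuple.lt_iff_lt_of_sort_eq ?_ ?_ h a b <;>
    exact fun a b hab => Fin.ext (by simpa using (Fin.mk.inj_iff.1 (Equiv.injective _ hab)))

theorem HasBifixLen.lt_iff_lt {τ : Perm' n} (h : HasBifixLen τ k) {i j i' j' : Fin n}
    (hi : (i : ℕ) < k) (hj : (j : ℕ) < k) (hi' : (i' : ℕ) = n - k + i)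
    (hj' : (j' : ℕ) = n - k + j) : τ i < τ j ↔ τ i' < τ j' := by
  obtain ⟨-, hkn, hw⟩ := h
  convert lt_iff_lt_of_window_eq (by omega) (by omega) hw ⟨i, hi⟩ ⟨j, hj⟩ using 3 <;>
    ext <;> simp [hi', hj']

def prefixValues (τ : Perm' n) (k : ℕ) : Finset (Fin n) :=
  (univ.filter fun i : Fin n => (i : ℕ) < k).image τ

def suffixValues (τ : Perm' n) (k : ℕ) : Finset (Fin n) :=
  (univ.filter fun i : Fin n => n - k ≤ (i : ℕ)).image τ

theorem apply_mem_prefixValues {τ : Perm' n} {j : Fin n} :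
    τ j ∈ prefixValues τ k ↔ (j : ℕ) < k := by
  simp [prefixValues]

theorem suffixValues_eq_compl (τ : Perm' n) (k : ℕ) :
    suffixValues τ k = (prefixValues τ (n - k))ᶜ := by
  ext y
  obtain ⟨j, rfl⟩ := τ.surjective y
  simp [suffixValues, prefixValues]

theorem HasBifixLen.card_filter_suffixValues_lt {τ : Perm' n} (h : HasBifixLen τ k)
    {j j' : Fin n} (hj : (j : ℕ) < k) (hj' : (j' : ℕ) = n - k + j) :
    #{y ∈ suffixValues τ k | y < τ j'} = #{y ∈ prefixValues τ k | y < τ j} := by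
  have hkn : k < n := h.2.1
  simp only [suffixValues, prefixValues, filter_image, card_image_of_injective _ τ.injective,
    filter_filter]
  symm
  refine card_bij' (fun i _ => ⟨n - k + i, by simp only [mem_filter, mem_univ, true_and] at *; omega⟩)
    (fun i _ => ⟨i - (n - k), by omega⟩) ?_ ?_ ?_ ?_
  · intro i hi
    simp only [mem_filter, mem_univ, true_and] at hi ⊢
    exact ⟨by omega, (h.lt_iff_lt hi.1 hj rfl hj').1 hi.2⟩
  · intro i hi
    simp only [mem_filter, mem_univ, true_and] at hi ⊢
    have hlt : i - (n - k) < k := by omega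
    exact ⟨hlt, (h.lt_iff_lt (i := ⟨i - (n - k), by omega⟩) hlt hj (by simp only; omega) hj').2 hi.2⟩
  · intro i hi
    ext
    simp
  · intro i hi
    simp only [mem_filter, mem_univ, true_and] at hi
    ext
    simp only
    omega

theorem HasBifixLen.ext {τ₁ τ₂ : Perm' n} (h₁ : HasBifixLen τ₁ k) (h₂ : HasBifixLen τ₂ k)
    (hhead : ∀ i : Fin n, (i : ℕ) < n - k → τ₁ i = τ₂ i)
    (hpre : prefixValues τ₁ k = prefixValues τ₂ k) : τ₁ = τ₂ := by
  have hkn : k < n := h₁.2.1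
  have hsuf : suffixValues τ₁ k = suffixValues τ₂ k := by
    rw [suffixValues_eq_compl, suffixValues_eq_compl, prefixValues,
      image_congr fun i hi => hhead i (by simpa using hi), prefixValues]
  ext j : 1
  induction j using WellFoundedLT.induction with
  | _ j ih =>
  by_cases hj : (j : ℕ) < n - k
  · exact hhead j hj
  -- the entry at `j` is the one of `suffixValues` whose rank there is that of the entry
  -- at the earlier position `i` in `prefixValues`
  let i : Fin n := ⟨j - (n - k), by omega⟩
  have hi : (i : ℕ) < k := by simp only [i]; omega
  have hji : (j : ℕ) = n - k + i := by simp only [i]; omega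
  have hmem : ∀ τ : Perm' n, τ j ∈ suffixValues τ k := fun τ => by
    rw [suffixValues_eq_compl, mem_compl, apply_mem_prefixValues]
    exact hj
  refine eq_of_card_filter_lt_eq (hsuf ▸ hmem τ₁) (hmem τ₂) ?_
  calc #{y ∈ suffixValues τ₂ k | y < τ₁ j}
      = #{y ∈ prefixValues τ₁ k | y < τ₁ i} := by rw [← hsuf, h₁.card_filter_suffixValues_lt hi hji]
    _ = #{y ∈ prefixValues τ₂ k | y < τ₂ i} := by rw [hpre, ih i (Fin.lt_def.2 (by simp only [i]; omega))]
    _ = #{y ∈ suffixValues τ₂ k | y < τ₂ j} := (h₂.card_filter_suffixValues_lt hi hji).symm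

theorem card_hasBifixLen_le_descFactorial_mul_two_pow (n k : ℕ) :
    #{τ : Perm' n | HasBifixLen τ k} ≤ n.descFactorial (n - k) * 2 ^ n := by
  have hinj : Set.InjOn (fun τ : Perm' n =>
      ((Fin.castLEEmb (n.sub_le k)).trans τ.toEmbedding, prefixValues τ k))
      {τ | HasBifixLen τ k} := by
    intro τ₁ h₁ τ₂ h₂ heq
    obtain ⟨hhead, hpre⟩ := Prod.mk.inj heq
    exact h₁.ext h₂ (fun i hi => DFunLike.congr_fun hhead ⟨i, hi⟩) hpre
  calc #{τ : Perm' n | HasBifixLen τ k}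
      ≤ #(univ : Finset ((Fin (n - k) ↪ Fin n) × Finset (Fin n))) :=
        card_le_card_of_injOn _ (fun _ _ => mem_univ _) (by simpa using hinj)
    _ = n.descFactorial (n - k) * 2 ^ n := by simp [Fintype.card_embedding_eq]

theorem card_hasBifixLen_le_descFactorial (h : 2 * k ≤ n) :
    #{τ : Perm' n | HasBifixLen τ k} ≤ n.descFactorial (n - k) := by
  have hinj : Set.InjOn (fun τ : Perm' n => (Fin.castLEEmb (n.sub_le k)).trans τ.toEmbedding)
      {τ | HasBifixLen τ k} := by
    intro τ₁ h₁ τ₂ h₂ heq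
    have hhead : ∀ i : Fin n, (i : ℕ) < n - k → τ₁ i = τ₂ i :=
      fun i hi => DFunLike.congr_fun heq ⟨i, hi⟩
    refine h₁.ext h₂ hhead (image_congr fun i hi => hhead i ?_)
    simp only [coe_filter, mem_univ, true_and, Set.mem_ofPred_eq] at hi
    omega
  calc #{τ : Perm' n | HasBifixLen τ k}
      ≤ #(univ : Finset (Fin (n - k) ↪ Fin n)) :=
        card_le_card_of_injOn _ (fun _ _ => mem_univ _) (by simpa using hinj)
    _ = n.descFactorial (n - k) := by simp [Fintype.card_embedding_eq]

theorem card_hasBifixLen_div_factorial_le (hk : k ≤ n) :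
    (#{τ : Perm' n | HasBifixLen τ k} : ℝ) / n ! ≤ 2 ^ n / k ! := by
  rw [div_le_div_iff₀ (by positivity) (by positivity)]
  have := Nat.mul_le_mul_right (k !) (card_hasBifixLen_le_descFactorial_mul_two_pow n k)
  exact_mod_cast this.trans_eq (by rw [← Nat.factorial_mul_descFactorial_sub hk]; ring)

theorem card_hasBifixLen_div_factorial_le_one_div (h : 2 * k ≤ n) :
    (#{τ : Perm' n | HasBifixLen τ k} : ℝ) / n ! ≤ 1 / k ! := by
  rw [div_le_div_iff₀ (by positivity) (by positivity)]
  have hk : k ≤ n := by omega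
  have := Nat.mul_le_mul_right (k !) (card_hasBifixLen_le_descFactorial h)
  exact_mod_cast this.trans_eq (by rw [← Nat.factorial_mul_descFactorial_sub hk]; ring)

theorem sum_card_hasBifixLen_div_factorial_le (n : ℕ) :
    ∑ k ∈ Icc (n / 2 + 1) (n - 1), (#{τ : Perm' n | HasBifixLen τ k} : ℝ) / n ! ≤
      n * 2 ^ n / (n / 2 + 1)! := by
  calc ∑ k ∈ Icc (n / 2 + 1) (n - 1), (#{τ : Perm' n | HasBifixLen τ k} : ℝ) / n !
      ≤ #(Icc (n / 2 + 1) (n - 1)) • (2 ^ n / (n / 2 + 1)! : ℝ) := by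
        refine sum_le_card_nsmul _ _ _ fun k hk => ?_
        rw [mem_Icc] at hk
        refine (card_hasBifixLen_div_factorial_le (by omega)).trans ?_
        gcongr
        exact hk.1
    _ ≤ n * 2 ^ n / (n / 2 + 1)! := by
        rw [nsmul_eq_mul, mul_div_assoc]
        gcongr
        simp only [Nat.card_Icc]
        omega

theorem hasBifixLen_extLen {τ : Perm' n} (h : extLen τ ≠ 0) : HasBifixLen τ (extLen τ) :=
  Nat.findGreatest_of_ne_zero rfl h

theorem card_le_extLen_le_sum_card_hasBifixLen {m : ℕ} (hm : 0 < m) :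
    #{τ : Perm' n | m ≤ extLen τ} ≤ ∑ k ∈ Icc m (n - 1), #{τ : Perm' n | HasBifixLen τ k} := by
  refine (card_le_card fun τ hτ => ?_).trans card_biUnion_le
  have hτ : m ≤ extLen τ := (mem_filter.1 hτ).2
  have hbif := hasBifixLen_extLen (τ := τ) (by omega)
  exact mem_biUnion.2 ⟨extLen τ, mem_Icc.2 ⟨hτ, by have := hbif.2.1; omega⟩, by simpa using hbif⟩

end Bifix

/-- Lemma 6.4: there is `g : ℕ → ℝ` with `n * g n → 0` such that for
all `2 ≤ n` and `1 ≤ m ≤ n - 1`, the proportion of `τ ∈ S_n` with `|x(τ)| ≥ m` is at most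
`∑_{i=m}^{⌊n/2⌋} 1/i! + g n` (the sum being empty when `m > ⌊n/2⌋`). -/
theorem stmt13 :
    ∃ g : ℕ → ℝ,
      Filter.Tendsto (fun n : ℕ => (n : ℝ) * g n) Filter.atTop (nhds 0) ∧
      ∀ n : ℕ, 2 ≤ n → ∀ m : ℕ, 1 ≤ m → m ≤ n - 1 →
        ((Finset.univ.filter fun τ : Perm' n => m ≤ extLen τ).card : ℝ) /
            (Nat.factorial n : ℝ) ≤
          (∑ i ∈ Finset.Icc m (n / 2), (1 : ℝ) / (Nat.factorial i : ℝ)) + g n := by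
  refine ⟨fun n => n * 2 ^ n / (n / 2 + 1)!, tendsto_mul_mul_two_pow_div_factorial,
    fun n _ m hm _ => ?_⟩
  set c : ℕ → ℝ := fun k => (#{τ : Perm' n | HasBifixLen τ k} : ℝ) / (n ! : ℝ)
  have hsplit : Icc m (n - 1) ⊆ Icc m (n / 2) ∪ Icc (n / 2 + 1) (n - 1) := fun k hk => by
    simp only [mem_union, mem_Icc] at hk ⊢
    omega
  have hdisj : Disjoint (Icc m (n / 2)) (Icc (n / 2 + 1) (n - 1)) :=
    disjoint_left.2 fun k hk hk' => by simp only [mem_Icc] at hk hk'; omega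
  calc (#{τ : Perm' n | m ≤ extLen τ} : ℝ) / n !
      ≤ ∑ k ∈ Icc m (n - 1), c k := by
        rw [← sum_div]
        gcongr
        exact_mod_cast card_le_extLen_le_sum_card_hasBifixLen hm
    _ ≤ ∑ k ∈ Icc m (n / 2), c k + ∑ k ∈ Icc (n / 2 + 1) (n - 1), c k := by
        rw [← sum_union hdisj]
        exact sum_le_sum_of_subset_of_nonneg hsplit fun _ _ _ => by positivity
    _ ≤ ∑ k ∈ Icc m (n / 2), 1 / (k ! : ℝ) + n * 2 ^ n / (n / 2 + 1)! := by
        gcongr with k hk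
        · exact card_hasBifixLen_div_factorial_le_one_div (by simp only [mem_Icc] at hk; omega)
        · exact sum_card_hasBifixLen_div_factorial_le n
end
end
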